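/- For every α ∈ ℤ^d there exists an essential point ε for Q such that (ε + Q) ∩ Q = (α + Q) ∩ Q. -/

import Mathlib

/-- The shift `α + S = {α + s : s ∈ S}` of a set `S ⊆ ℤ^d` by `α ∈ ℤ^d`. -/
def shiftSet {d : ℕ} (α : Fin d → ℤ) (S : Set (Fin d → ℤ)) : Set (Fin d → ℤ) :=
  (α + ·) '' S

/-- An essential point for `Q` is an `ε ∈ ℤ^d` such that whenever `a ∈ Q` satisfies
`(a + ε + Q) ∩ Q = (ε + Q) ∩ Q`, `a` is a unit of `Q` (i.e. `-a ∈ Q`). -/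
def essentialPoint {d : ℕ} (Q : AddSubmonoid (Fin d → ℤ)) (ε : Fin d → ℤ) : Prop :=
  ∀ a ∈ Q, shiftSet (a + ε) (Q : Set (Fin d → ℤ)) ∩ (Q : Set (Fin d → ℤ)) =
      shiftSet ε (Q : Set (Fin d → ℤ)) ∩ (Q : Set (Fin d → ℤ)) → -a ∈ Q

/-!
Write `α = p - β` with `p, β ∈ Q`. The shifts `a ∈ Q` with `(α + a + Q) ∩ Q = (α + Q) ∩ Q` all
divide `β` in `Q`, since `p` lies in that intersection. By Dickson's lemma the divisibility
preorder of a finitely generated monoid is a well-quasi-order, so among these shifts there is one,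
`a₀`, that is maximal up to units; `ε = α + a₀` is then an essential point.
-/

namespace AddSubmonoid

variable {G : Type*} [AddCommGroup G] (Q : AddSubmonoid G)

def Divides (x y : G) : Prop := y - x ∈ Q

instance : IsPreorder G Q.Divides where
  refl x := by simp [Divides, Q.zero_mem]
  trans x y z hxy hyz := by
    simpa [Divides] using Q.add_mem hyz hxy

variable {Q}

theorem exists_sub_eq_of_closure_eq_top (hQ : AddSubgroup.closure (Q : Set G) = ⊤) (x : G) :
    ∃ p ∈ Q, ∃ q ∈ Q, x = p - q := by
  induction (hQ ▸ AddSubgroup.mem_top x : x ∈ AddSubgroup.closure (Q : Set G))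
    using AddSubgroup.closure_induction with
  | mem x hx => exact ⟨x, hx, 0, Q.zero_mem, (sub_zero x).symm⟩
  | zero => exact ⟨0, Q.zero_mem, 0, Q.zero_mem, (sub_zero 0).symm⟩
  | add x y _ _ hx hy =>
    obtain ⟨p, hp, q, hq, rfl⟩ := hx
    obtain ⟨p', hp', q', hq', rfl⟩ := hy
    exact ⟨p + p', Q.add_mem hp hp', q + q', Q.add_mem hq hq', by abel⟩
  | neg x _ hx =>
    obtain ⟨p, hp, q, hq, rfl⟩ := hx
    exact ⟨q, hq, p, hp, neg_sub p q⟩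

theorem FG.partiallyWellOrderedOn_divides (hQ : Q.FG) :
    (Q : Set G).PartiallyWellOrderedOn Q.Divides := by
  obtain ⟨S, rfl⟩ := hQ
  have hQ_eq_image : ((closure (S : Set G)) : Set G) =
      (fun a : S → ℕ => ∑ i, a i • i.1) '' Set.univ := by
    ext x
    simp [mem_closure_finset', eq_comm]
  rw [hQ_eq_image]
  refine (Set.isPWO_of_wellQuasiOrderedLE Set.univ).image_of_monotone_on ?_
  intro a _ b _ hab
  have hsub : ∑ i, b i • i.1 - ∑ i, a i • i.1 = ∑ i, (b i - a i) • i.1 := by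
    rw [← Finset.sum_sub_distrib]
    refine Finset.sum_congr rfl fun i _ => ?_
    rw [sub_eq_iff_eq_add, ← add_nsmul, Nat.sub_add_cancel (hab i)]
  rw [Divides, hsub]
  exact sum_mem _ fun i _ => nsmul_mem (subset_closure i.2) _

theorem FG.exists_maximal_of_forall_sub_mem (hQ : Q.FG) {U : Set G} (hU : U.Nonempty) {β : G}
    (hβ : ∀ a ∈ U, β - a ∈ Q) : ∃ a₀ ∈ U, ∀ a ∈ Q, a₀ + a ∈ U → -a ∈ Q := by
  have hwf := (hQ.partiallyWellOrderedOn_divides.mono (s := (β - ·) '' U)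
    (Set.image_subset_iff.2 hβ)).wellFoundedOn
  obtain ⟨a, ha⟩ := hU
  obtain ⟨⟨_, a₀, ha₀, rfl⟩, -, hmin⟩ := hwf.has_min Set.univ ⟨⟨β - a, a, ha, rfl⟩, trivial⟩
  refine ⟨a₀, ha₀, fun b hb hab => ?_⟩
  by_contra hnb
  refine hmin ⟨β - (a₀ + b), a₀ + b, hab, rfl⟩ trivial ⟨?_, ?_⟩
  · simpa [Divides] using hb
  · simpa [Divides] using hnb

end AddSubmonoid

lemma mem_shiftSet {d : ℕ} {γ x : Fin d → ℤ} {S : Set (Fin d → ℤ)} :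
    x ∈ shiftSet γ S ↔ x - γ ∈ S := by
  constructor
  · rintro ⟨s, hs, rfl⟩
    simpa using hs
  · intro h
    exact ⟨x - γ, h, add_sub_cancel γ x⟩

lemma sub_mem_of_shiftSet_inter_eq {d : ℕ} {Q : AddSubmonoid (Fin d → ℤ)} {p β a : Fin d → ℤ}
    (hp : p ∈ Q) (hβ : β ∈ Q)
    (h : shiftSet (p - β + a) (Q : Set (Fin d → ℤ)) ∩ (Q : Set (Fin d → ℤ)) =
      shiftSet (p - β) (Q : Set (Fin d → ℤ)) ∩ (Q : Set (Fin d → ℤ))) :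
    β - a ∈ Q := by
  have hpβ : p ∈ shiftSet (p - β) (Q : Set (Fin d → ℤ)) ∩ (Q : Set (Fin d → ℤ)) :=
    ⟨mem_shiftSet.2 (by simpa using hβ), hp⟩
  rw [← h] at hpβ
  have hsub : p - (p - β + a) = β - a := by abel
  simpa [hsub] using mem_shiftSet.1 hpβ.1

/-- For every `α ∈ ℤ^d` there exists an essential point `ε` for `Q` such that
`(ε + Q) ∩ Q = (α + Q) ∩ Q`. -/
theorem stmt8 {d : ℕ} (Q : AddSubmonoid (Fin d → ℤ)) (hFG : Q.FG)
    (hgp : AddSubgroup.closure (Q : Set (Fin d → ℤ)) = ⊤)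
    (α : Fin d → ℤ) :
    ∃ ε : Fin d → ℤ, essentialPoint Q ε ∧
      shiftSet ε (Q : Set (Fin d → ℤ)) ∩ (Q : Set (Fin d → ℤ)) =
        shiftSet α (Q : Set (Fin d → ℤ)) ∩ (Q : Set (Fin d → ℤ)) := by
  obtain ⟨p, hp, β, hβ, rfl⟩ := AddSubmonoid.exists_sub_eq_of_closure_eq_top hgp α
  set U : Set (Fin d → ℤ) := {a | a ∈ Q ∧
    shiftSet (p - β + a) (Q : Set (Fin d → ℤ)) ∩ (Q : Set (Fin d → ℤ)) =
      shiftSet (p - β) (Q : Set (Fin d → ℤ)) ∩ (Q : Set (Fin d → ℤ))}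
  obtain ⟨a₀, ⟨ha₀, hU₀⟩, hmax⟩ := hFG.exists_maximal_of_forall_sub_mem (U := U)
    ⟨0, Q.zero_mem, by rw [add_zero]⟩ fun a ha => sub_mem_of_shiftSet_inter_eq hp hβ ha.2
  refine ⟨p - β + a₀, fun a ha h => hmax a ha ⟨Q.add_mem ha₀ ha, ?_⟩, hU₀⟩
  rwa [← add_assoc, add_comm _ a, h]
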